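/- arXiv:0811.3355 — 5 statements merged into one kernel-verified Lean document; each statement's English description precedes it below -/
import Mathlib

section
/- In the rejection scheme in which θ ~ π, X | θ ~ f(·|θ), U ~ Uniform[0,1] independently, and θ is accepted if and only if U ≤ π_ε(D − X)/c, and assuming the normalising constant Z := ∫ π(θ') ∫ π_ε(D − x) f(x|θ') dx dθ' is positive and finite, the conditional distribution of θ given acceptance has density θ ↦ π(θ) ∫ π_ε(D − x) f(x|θ) dx / Z with respect to Lebesgue measure on Θ. -/
/-!
If `U` is uniform on `[0, 1]` and independent of `Z`, then `P(U ≤ h(Z), Z ∈ T) = ∫_T h dP_Z`,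
so restricting to the acceptance event multiplies the joint density `π(θ) f(x|θ)` by the
acceptance probability `π_ε(D − x)/c` (at most `1` because `π_ε ≤ c`). Integrating out `x` leaves
the unnormalised marginal `π(θ) ∫ π_ε(D − x) f(x|θ) dx / c`, whose total mass `Z / c` is the
probability of acceptance; conditioning divides by exactly this mass.
-/

open MeasureTheory ProbabilityTheory
open scoped ENNReal

lemma volume_restrict_Icc_zero_one_Iic {t : ℝ} (ht : t ≤ 1) :
    volume.restrict (Set.Icc (0 : ℝ) 1) (Set.Iic t) = ENNReal.ofReal t := by
  have h : Set.Iic t ∩ Set.Icc 0 1 = Set.Icc 0 t := by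
    ext u
    simp only [Set.mem_inter_iff, Set.mem_Iic, Set.mem_Icc]
    exact ⟨fun h => ⟨h.2.1, h.1⟩, fun h => ⟨h.2, h.1, h.2.trans ht⟩⟩
  rw [Measure.restrict_apply measurableSet_Iic, h, Real.volume_Icc, sub_zero]

section UniformAcceptance

variable {γ : Type*} [MeasurableSpace γ] (μ : Measure γ) {h : γ → ℝ}

lemma prod_uniform_setOf_le (hh : Measurable h) (h₁ : ∀ z, h z ≤ 1) :
    (μ.prod (volume.restrict (Set.Icc 0 1))) {ω | ω.2 ≤ h ω.1} =
      ∫⁻ z, ENNReal.ofReal (h z) ∂μ := by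
  have hA : MeasurableSet {ω : γ × ℝ | ω.2 ≤ h ω.1} :=
    measurableSet_le measurable_snd (hh.comp measurable_fst)
  rw [Measure.prod_apply hA]
  exact lintegral_congr fun z => volume_restrict_Icc_zero_one_Iic (h₁ z)

lemma map_fst_restrict_prod_uniform_setOf_le [SFinite μ] (hh : Measurable h) (h₁ : ∀ z, h z ≤ 1) :
    ((μ.prod (volume.restrict (Set.Icc 0 1))).restrict {ω | ω.2 ≤ h ω.1}).map Prod.fst =
      μ.withDensity fun z => ENNReal.ofReal (h z) := by
  have hA : MeasurableSet {ω : γ × ℝ | ω.2 ≤ h ω.1} :=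
    measurableSet_le measurable_snd (hh.comp measurable_fst)
  ext T hT
  rw [Measure.map_apply measurable_fst hT, Measure.restrict_apply (measurable_fst hT),
    Set.inter_comm, ← Measure.restrict_apply hA,
    ← Set.prod_univ, ← Measure.restrict_prod_eq_prod_univ,
    prod_uniform_setOf_le _ hh h₁, withDensity_apply _ hT]

end UniformAcceptance

lemma map_fst_withDensity_prod {α β : Type*} [MeasurableSpace α] [MeasurableSpace β]
    (μ : Measure α) (ν : Measure β) [SFinite μ] [SFinite ν] {F : α × β → ℝ≥0∞}
    (hF : Measurable F) :
    ((μ.prod ν).withDensity F).map Prod.fst = μ.withDensity fun a => ∫⁻ b, F (a, b) ∂ν := by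
  ext s hs
  rw [Measure.map_apply measurable_fst hs, withDensity_apply _ (measurable_fst hs),
    ← Set.prod_univ, ← Measure.restrict_prod_eq_prod_univ, lintegral_prod _ hF.aemeasurable,
    withDensity_apply _ hs]

lemma map_fst_fst_restrict_withDensity_prod_uniform_setOf_le {α β : Type*} [MeasurableSpace α]
    [MeasurableSpace β] (μ : Measure α) (ν : Measure β) [SFinite μ] [SFinite ν]
    {F : α × β → ℝ≥0∞} (hF : Measurable F) {h : α × β → ℝ} (hh : Measurable h)
    (h₁ : ∀ z, h z ≤ 1) :
    ((((μ.prod ν).withDensity F).prod (volume.restrict (Set.Icc 0 1))).restrict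
        {ω | ω.2 ≤ h ω.1}).map (fun ω => ω.1.1) =
      μ.withDensity fun a => ∫⁻ b, F (a, b) * ENNReal.ofReal (h (a, b)) ∂ν := by
  refine (Measure.map_map measurable_fst measurable_fst).symm.trans ?_
  rw [map_fst_restrict_prod_uniform_setOf_le _ hh h₁, ← withDensity_mul _ hF hh.ennreal_ofReal,
    map_fst_withDensity_prod _ _ (hF.mul hh.ennreal_ofReal)]
  rfl

lemma lintegral_ofReal_mul_mul_ofReal_div {α : Type*} [MeasurableSpace α] {μ : Measure α}
    {a c : ℝ} {u v : α → ℝ} (ha : 0 ≤ a) (hc : 0 ≤ c) (hu : ∀ x, 0 ≤ u x) (hv : ∀ x, 0 ≤ v x)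
    (hvu : Integrable (fun x => v x * u x) μ) :
    ∫⁻ x, ENNReal.ofReal (a * u x) * ENNReal.ofReal (v x / c) ∂μ =
      ENNReal.ofReal (a * (∫ x, v x * u x ∂μ) / c) := by
  have hnonneg x : 0 ≤ a / c * (v x * u x) :=
    mul_nonneg (div_nonneg ha hc) (mul_nonneg (hv x) (hu x))
  calc _ = ∫⁻ x, ENNReal.ofReal (a / c * (v x * u x)) ∂μ := by
        refine lintegral_congr fun x => ?_
        rw [← ENNReal.ofReal_mul (mul_nonneg ha (hu x))]
        ring_nf
    _ = ENNReal.ofReal (∫ x, a / c * (v x * u x) ∂μ) :=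
        (ofReal_integral_eq_lintegral_ofReal (hvu.const_mul _) (ae_of_all _ hnonneg)).symm
    _ = _ := by rw [integral_const_mul, div_mul_eq_mul_div]

lemma map_cond_eq_withDensity_div_lintegral {Ω α : Type*} [MeasurableSpace Ω] [MeasurableSpace α]
    {P : Measure Ω} {A : Set Ω} {Φ : Ω → α} (hΦ : Measurable Φ) {ν : Measure α}
    {F : α → ℝ≥0∞} (hmarg : (P.restrict A).map Φ = ν.withDensity F) (hF : ∫⁻ a, F a ∂ν ≠ 0) :
    (P[|A]).map Φ = ν.withDensity fun a => F a / ∫⁻ a, F a ∂ν := by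
  have hPA : P A = ∫⁻ a, F a ∂ν := by
    rw [← Measure.restrict_apply_univ, ← Set.preimage_univ (f := Φ), ← Measure.map_apply hΦ .univ,
      hmarg, withDensity_apply _ .univ, Measure.restrict_univ]
  rw [ProbabilityTheory.cond, Measure.map_smul, hmarg, hPA,
    ← withDensity_smul' _ _ (ENNReal.inv_ne_top.2 hF)]
  congr with a
  exact ENNReal.div_eq_inv_mul.symm

theorem abc_rejection_conditional_density_general (p d : ℕ)
    (π : (Fin p → ℝ) → ℝ) (f : (Fin p → ℝ) → (Fin d → ℝ) → ℝ)
    (πε : (Fin d → ℝ) → ℝ) (D : Fin d → ℝ) (c : ℝ)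
    (hπ_meas : Measurable π) (hπ_nonneg : ∀ θ, 0 ≤ π θ)
    (hf_meas : Measurable (Function.uncurry f)) (hf_nonneg : ∀ θ x, 0 ≤ f θ x)
    (hf_int : ∀ θ, ∫ x, f θ x = 1)
    (hε_meas : Measurable πε) (hε_nonneg : ∀ r, 0 ≤ πε r)
    (hc : 0 < c) (hεc : ∀ r, πε r ≤ c)
    (hZ_pos : 0 < ∫ θ, π θ * ∫ x, πε (D - x) * f θ x)
    (hZ_fin : Integrable (fun θ => π θ * ∫ x, πε (D - x) * f θ x)) :
    Measure.map (fun ω : ((Fin p → ℝ) × (Fin d → ℝ)) × ℝ => ω.1.1)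
      (ProbabilityTheory.cond
        ((((volume : Measure ((Fin p → ℝ) × (Fin d → ℝ))).withDensity
            (fun q => ENNReal.ofReal (π q.1 * f q.1 q.2))).prod
          ((volume : Measure ℝ).restrict (Set.Icc 0 1))))
        {ω : ((Fin p → ℝ) × (Fin d → ℝ)) × ℝ | ω.2 ≤ πε (D - ω.1.2) / c})
    = (volume : Measure (Fin p → ℝ)).withDensity
        (fun θ => ENNReal.ofReal (π θ * (∫ x, πε (D - x) * f θ x) /
          (∫ θ', π θ' * ∫ x, πε (D - x) * f θ' x))) := by
  set g := fun θ => ∫ x, πε (D - x) * f θ x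
  set Z := ∫ θ, π θ * g θ
  have hε_D : Measurable fun x => πε (D - x) := hε_meas.comp (measurable_const.sub measurable_id)
  have hjoint : Measurable fun q : (Fin p → ℝ) × (Fin d → ℝ) => ENNReal.ofReal (π q.1 * f q.1 q.2) :=
    ((hπ_meas.comp measurable_fst).mul hf_meas).ennreal_ofReal
  have haccept : Measurable fun q : (Fin p → ℝ) × (Fin d → ℝ) => πε (D - q.2) / c :=
    (hε_D.comp measurable_snd).div_const c
  have hlik_int θ : Integrable fun x => πε (D - x) * f θ x :=
    (integrable_of_integral_eq_one (hf_int θ)).bdd_mul hε_D.aestronglyMeasurable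
      (ae_of_all _ fun x => (Real.norm_of_nonneg (hε_nonneg _)).trans_le (hεc _))
  have hmarginal := (map_fst_fst_restrict_withDensity_prod_uniform_setOf_le volume volume hjoint
    haccept fun q => (div_le_one hc).2 (hεc _)).trans <| congrArg _ <| funext fun θ =>
      lintegral_ofReal_mul_mul_ofReal_div (hπ_nonneg θ) hc.le (hf_nonneg θ)
        (fun _ => hε_nonneg _) (hlik_int θ)
  have htotal : ∫⁻ θ, ENNReal.ofReal (π θ * g θ / c) = ENNReal.ofReal (Z / c) := by
    rw [← integral_div, ofReal_integral_eq_lintegral_ofReal (hZ_fin.div_const c)]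
    exact ae_of_all _ fun θ => div_nonneg (mul_nonneg (hπ_nonneg θ)
      (integral_nonneg fun x => mul_nonneg (hε_nonneg _) (hf_nonneg θ x))) hc.le
  have hZc : 0 < Z / c := div_pos hZ_pos hc
  refine (map_cond_eq_withDensity_div_lintegral measurable_fst.fst hmarginal ?_).trans ?_
  · exact htotal ▸ (ENNReal.ofReal_pos.2 hZc).ne'
  rw [htotal]
  congr with θ
  rw [← ENNReal.ofReal_div_of_pos hZc, div_div_div_cancel_right₀ hc.ne']

/-- In the ABC rejection scheme (θ ~ π, X | θ ~ f(·|θ), U ~ Uniform[0,1]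
independent, accept iff U ≤ π_ε(D − X)/c), provided the normalising constant
Z = ∫ π(θ') ∫ π_ε(D − x) f(x|θ') dx dθ' is positive and finite, the conditional distribution
of θ given acceptance has density θ ↦ π(θ) ∫ π_ε(D − x) f(x|θ) dx / Z w.r.t. Lebesgue measure. -/
theorem abc_rejection_conditional_density (p d : ℕ)
    (π : (Fin p → ℝ) → ℝ) (f : (Fin p → ℝ) → (Fin d → ℝ) → ℝ)
    (πε : (Fin d → ℝ) → ℝ) (D : Fin d → ℝ) (c : ℝ)
    (hπ_meas : Measurable π) (hπ_nonneg : ∀ θ, 0 ≤ π θ) (hπ_int : ∫ θ, π θ = 1)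
    (hf_meas : Measurable (Function.uncurry f)) (hf_nonneg : ∀ θ x, 0 ≤ f θ x)
    (hf_int : ∀ θ, ∫ x, f θ x = 1)
    (hε_meas : Measurable πε) (hε_nonneg : ∀ r, 0 ≤ πε r) (hε_int : ∫ r, πε r = 1)
    (hc : 0 < c) (hεc : ∀ r, πε r ≤ c)
    (hZ_pos : 0 < ∫ θ, π θ * ∫ x, πε (D - x) * f θ x)
    (hZ_fin : Integrable (fun θ => π θ * ∫ x, πε (D - x) * f θ x)) :
    Measure.map (fun ω : ((Fin p → ℝ) × (Fin d → ℝ)) × ℝ => ω.1.1)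
      (ProbabilityTheory.cond
        ((((volume : Measure ((Fin p → ℝ) × (Fin d → ℝ))).withDensity
            (fun q => ENNReal.ofReal (π q.1 * f q.1 q.2))).prod
          ((volume : Measure ℝ).restrict (Set.Icc 0 1))))
        {ω : ((Fin p → ℝ) × (Fin d → ℝ)) × ℝ | ω.2 ≤ πε (D - ω.1.2) / c})
    = (volume : Measure (Fin p → ℝ)).withDensity
        (fun θ => ENNReal.ofReal (π θ * (∫ x, πε (D - x) * f θ x) /
          (∫ θ', π θ' * ∫ x, πε (D - x) * f θ' x))) :=
  abc_rejection_conditional_density_general p d π f πε D c hπ_meas hπ_nonneg hf_meas hf_nonneg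
    hf_int hε_meas hε_nonneg hc hεc hZ_pos hZ_fin
end

section
/- (Generalised acceptance, covering sampling/observation models.) Let g : 𝒳 → [0, ∞) be measurable with g(x) ≤ c for all x, interpreted as the likelihood of the observed data D given latent model output x. In the rejection scheme in which θ ~ π, X | θ ~ f(·|θ), U ~ Uniform[0,1] independently, and θ is accepted iff U ≤ g(X)/c, and assuming Z := ∫ π(θ') ∫ g(x) f(x|θ') dx dθ' is positive and finite, the conditional density of θ given acceptance is θ ↦ π(θ) ∫ g(x) f(x|θ) dx / Z, i.e. the exact posterior density of θ in the hierarchical model θ → X → D with P(D | X = x) proportional to g(x). -/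
open MeasureTheory ProbabilityTheory

/-- **generalised acceptance probability.** Let g : 𝒳 → [0,∞) be measurable with
g ≤ c (the likelihood of the observed data D given latent model output x).  In the rejection
scheme θ ~ π, X | θ ~ f(·|θ), U ~ Uniform[0,1] independent, accept iff U ≤ g(X)/c, and assuming
Z = ∫ π(θ') ∫ g(x) f(x|θ') dx dθ' is positive and finite, the conditional density of θ given
acceptance is θ ↦ π(θ) ∫ g(x) f(x|θ) dx / Z, the exact posterior in the hierarchical model
θ → X → D with P(D | X = x) ∝ g(x). -/
theorem abc_general_acceptance_posterior (p d : ℕ)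
    (π : (Fin p → ℝ) → ℝ) (f : (Fin p → ℝ) → (Fin d → ℝ) → ℝ)
    (g : (Fin d → ℝ) → ℝ) (c : ℝ)
    (hπ_meas : Measurable π) (hπ_nonneg : ∀ θ, 0 ≤ π θ) (hπ_int : ∫ θ, π θ = 1)
    (hf_meas : Measurable (Function.uncurry f)) (hf_nonneg : ∀ θ x, 0 ≤ f θ x)
    (hf_int : ∀ θ, ∫ x, f θ x = 1)
    (hg_meas : Measurable g) (hg_nonneg : ∀ x, 0 ≤ g x)
    (hc : 0 < c) (hgc : ∀ x, g x ≤ c)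
    (hZ_pos : 0 < ∫ θ, π θ * ∫ x, g x * f θ x)
    (hZ_fin : Integrable (fun θ => π θ * ∫ x, g x * f θ x)) :
    Measure.map (fun ω : ((Fin p → ℝ) × (Fin d → ℝ)) × ℝ => ω.1.1)
      (ProbabilityTheory.cond
        ((((volume : Measure ((Fin p → ℝ) × (Fin d → ℝ))).withDensity
            (fun q => ENNReal.ofReal (π q.1 * f q.1 q.2))).prod
          ((volume : Measure ℝ).restrict (Set.Icc 0 1))))
        {ω : ((Fin p → ℝ) × (Fin d → ℝ)) × ℝ | ω.2 ≤ g ω.1.2 / c})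
    = (volume : Measure (Fin p → ℝ)).withDensity
        (fun θ => ENNReal.ofReal (π θ * (∫ x, g x * f θ x) /
          (∫ θ', π θ' * ∫ x, g x * f θ' x))) := by
  set ρ : ((Fin p → ℝ) × (Fin d → ℝ)) → ENNReal :=
    fun q => ENNReal.ofReal (π q.1 * f q.1 q.2) with hρ_def
  have hρ_meas : Measurable ρ :=
    ((hπ_meas.comp measurable_fst).mul hf_meas).ennreal_ofReal
  set μ : Measure ((Fin p → ℝ) × (Fin d → ℝ)) :=
    (volume : Measure ((Fin p → ℝ) × (Fin d → ℝ))).withDensity ρ with hμ_def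
  set ν : Measure ℝ := (volume : Measure ℝ).restrict (Set.Icc 0 1) with hν_def
  set A : Set (((Fin p → ℝ) × (Fin d → ℝ)) × ℝ) := {ω | ω.2 ≤ g ω.1.2 / c} with hA_def
  have hgdc : Measurable (fun ω : ((Fin p → ℝ) × (Fin d → ℝ)) × ℝ => g ω.1.2 / c) :=
    (hg_meas.comp (measurable_snd.comp measurable_fst)).div_const c
  have hA_meas : MeasurableSet A := measurableSet_le measurable_snd hgdc
  set I : (Fin p → ℝ) → ℝ := fun θ => ∫ x, g x * f θ x with hI_def
  have hI_nonneg : ∀ θ, 0 ≤ I θ := fun θ =>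
    integral_nonneg fun x => mul_nonneg (hg_nonneg x) (hf_nonneg θ x)
  -- integrability facts
  have hfθ_meas : ∀ θ, Measurable (f θ) := fun θ =>
    hf_meas.comp measurable_prodMk_left
  have hfθ_int : ∀ θ, Integrable (f θ) := by
    intro θ
    by_contra h
    have := hf_int θ
    rw [integral_undef h] at this
    exact one_ne_zero this.symm
  have hgf_meas : ∀ θ, Measurable (fun x => g x * f θ x) := fun θ =>
    hg_meas.mul (hfθ_meas θ)
  have hgf_int : ∀ θ, Integrable (fun x => g x * f θ x) := by
    intro θ
    refine Integrable.mono ((hfθ_int θ).const_mul c)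
      ((hgf_meas θ).aestronglyMeasurable) (ae_of_all _ fun x => ?_)
    rw [Real.norm_eq_abs, Real.norm_eq_abs,
      abs_of_nonneg (mul_nonneg (hg_nonneg x) (hf_nonneg θ x)),
      abs_of_nonneg (mul_nonneg hc.le (hf_nonneg θ x))]
    exact mul_le_mul_of_nonneg_right (hgc x) (hf_nonneg θ x)
  -- slice measure
  have hslice : ∀ q : (Fin p → ℝ) × (Fin d → ℝ),
      ν (Set.Iic (g q.2 / c)) = ENNReal.ofReal (g q.2 / c) := by
    intro q
    have h0 : 0 ≤ g q.2 / c := div_nonneg (hg_nonneg _) hc.le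
    have h1 : g q.2 / c ≤ 1 := (div_le_one hc).2 (hgc _)
    rw [hν_def, Measure.restrict_apply measurableSet_Iic]
    have hset : Set.Iic (g q.2 / c) ∩ Set.Icc 0 1 = Set.Icc 0 (g q.2 / c) := by
      ext u
      simp only [Set.mem_inter_iff, Set.mem_Iic, Set.mem_Icc]
      exact ⟨fun h => ⟨h.2.1, h.1⟩, fun h => ⟨h.2, h.1, h.2.trans h1⟩⟩
    rw [hset, Real.volume_Icc, sub_zero]
  have hGc : Measurable (fun q : (Fin p → ℝ) × (Fin d → ℝ) =>
      ENNReal.ofReal (g q.2 / c)) :=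
    ((hg_meas.comp measurable_snd).div_const c).ennreal_ofReal
  -- the key computation
  have key : ∀ s : Set (Fin p → ℝ), MeasurableSet s →
      (μ.prod ν) (A ∩ (fun ω : ((Fin p → ℝ) × (Fin d → ℝ)) × ℝ => ω.1.1) ⁻¹' s)
        = ∫⁻ θ in s, ENNReal.ofReal (π θ * (I θ / c)) := by
    intro s hs
    have hAs : MeasurableSet
        (A ∩ (fun ω : ((Fin p → ℝ) × (Fin d → ℝ)) × ℝ => ω.1.1) ⁻¹' s) :=
      hA_meas.inter ((measurable_fst.comp measurable_fst) hs)
    rw [Measure.prod_apply hAs]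
    have hsect : ∀ q : (Fin p → ℝ) × (Fin d → ℝ),
        ν (Prod.mk q ⁻¹' (A ∩ (fun ω : ((Fin p → ℝ) × (Fin d → ℝ)) × ℝ => ω.1.1) ⁻¹' s))
          = Set.indicator (s ×ˢ (Set.univ : Set (Fin d → ℝ)))
              (fun q : (Fin p → ℝ) × (Fin d → ℝ) => ENNReal.ofReal (g q.2 / c)) q := by
      intro q
      by_cases hq : q.1 ∈ s
      · have hpre : Prod.mk q ⁻¹'
            (A ∩ (fun ω : ((Fin p → ℝ) × (Fin d → ℝ)) × ℝ => ω.1.1) ⁻¹' s)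
            = Set.Iic (g q.2 / c) := by
          ext u; simp [hA_def, hq]
        rw [hpre, hslice q, Set.indicator_of_mem (by simp [hq])]
      · have hpre : Prod.mk q ⁻¹'
            (A ∩ (fun ω : ((Fin p → ℝ) × (Fin d → ℝ)) × ℝ => ω.1.1) ⁻¹' s)
            = (∅ : Set ℝ) := by
          ext u; simp [hA_def, hq]
        rw [hpre, measure_empty, Set.indicator_of_notMem (by simp [hq])]
    rw [lintegral_congr hsect, lintegral_indicator (hs.prod MeasurableSet.univ)]
    rw [hμ_def, restrict_withDensity (hs.prod MeasurableSet.univ),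
      lintegral_withDensity_eq_lintegral_mul _ hρ_meas hGc]
    have hrestr : ((volume : Measure ((Fin p → ℝ) × (Fin d → ℝ))).restrict
          (s ×ˢ (Set.univ : Set (Fin d → ℝ))))
        = ((volume : Measure (Fin p → ℝ)).restrict s).prod
            (volume : Measure (Fin d → ℝ)) := by
      rw [Measure.volume_eq_prod, ← Measure.prod_restrict, Measure.restrict_univ]
    rw [hrestr]
    rw [lintegral_prod (ρ * fun q : (Fin p → ℝ) × (Fin d → ℝ) =>
      ENNReal.ofReal (g q.2 / c)) ((hρ_meas.mul hGc).aemeasurable)]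
    refine lintegral_congr fun θ => ?_
    have hinner : ∀ x : Fin d → ℝ,
        (ρ * fun q : (Fin p → ℝ) × (Fin d → ℝ) => ENNReal.ofReal (g q.2 / c)) (θ, x)
          = ENNReal.ofReal (π θ) * ENNReal.ofReal (g x * f θ x / c) := by
      intro x
      simp only [Pi.mul_apply, hρ_def]
      rw [← ENNReal.ofReal_mul (mul_nonneg (hπ_nonneg θ) (hf_nonneg θ x)),
        ← ENNReal.ofReal_mul (hπ_nonneg θ)]
      ring_nf
    rw [lintegral_congr hinner, lintegral_const_mul _
      (((hgf_meas θ).div_const c).ennreal_ofReal)]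
    rw [← ofReal_integral_eq_lintegral_ofReal ((hgf_int θ).div_const c)
      (ae_of_all _ fun x => div_nonneg (mul_nonneg (hg_nonneg x) (hf_nonneg θ x)) hc.le)]
    rw [integral_div, ← ENNReal.ofReal_mul (hπ_nonneg θ)]
  -- total acceptance mass
  set Z : ℝ := ∫ θ', π θ' * ∫ x, g x * f θ' x with hZ_def
  have hZ_pos' : 0 < Z := hZ_pos
  have hZ_fin' : Integrable (fun θ => π θ * I θ) := hZ_fin
  have htot : (μ.prod ν) A = ENNReal.ofReal (Z / c) := by
    have h := key Set.univ MeasurableSet.univ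
    simp only [Set.preimage_univ, Set.inter_univ, Measure.restrict_univ] at h
    rw [h, ← ofReal_integral_eq_lintegral_ofReal]
    · congr 1
      rw [hZ_def, ← integral_div]
      exact integral_congr_ae (ae_of_all _ fun θ => by rw [hI_def]; ring)
    · have he : (fun θ => π θ * (I θ / c)) = fun θ => (π θ * I θ) / c := by
        funext θ; ring
      rw [he]
      exact hZ_fin'.div_const c
    · exact ae_of_all _ fun θ =>
        mul_nonneg (hπ_nonneg θ) (div_nonneg (hI_nonneg θ) hc.le)
  -- finish
  have haZ : ENNReal.ofReal Z ≠ 0 := by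
    simp [ENNReal.ofReal_eq_zero, not_le, hZ_pos']
  have haZt : ENNReal.ofReal Z ≠ ⊤ := ENNReal.ofReal_ne_top
  have hbc : ENNReal.ofReal c ≠ 0 := by
    simp [ENNReal.ofReal_eq_zero, not_le, hc]
  have hbct : ENNReal.ofReal c ≠ ⊤ := ENNReal.ofReal_ne_top
  have hproj : Measurable (fun ω : ((Fin p → ℝ) × (Fin d → ℝ)) × ℝ => ω.1.1) :=
    measurable_fst.comp measurable_fst
  ext s hs
  rw [Measure.map_apply hproj hs, cond_apply hA_meas, key s hs, htot,
    withDensity_apply _ hs]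
  have hpt : ∀ θ, ENNReal.ofReal (π θ * I θ / Z)
      = ENNReal.ofReal (π θ * I θ) / ENNReal.ofReal Z := fun θ =>
    ENNReal.ofReal_div_of_pos hZ_pos'
  have hpt2 : ∀ θ, ENNReal.ofReal (π θ * (I θ / c))
      = ENNReal.ofReal (π θ * I θ) / ENNReal.ofReal c := fun θ => by
    rw [← mul_div_assoc]
    exact ENNReal.ofReal_div_of_pos hc
  calc (ENNReal.ofReal (Z / c))⁻¹ * ∫⁻ θ in s, ENNReal.ofReal (π θ * (I θ / c))
      = (ENNReal.ofReal Z / ENNReal.ofReal c)⁻¹ *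
          ((ENNReal.ofReal c)⁻¹ * ∫⁻ θ in s, ENNReal.ofReal (π θ * I θ)) := by
        rw [ENNReal.ofReal_div_of_pos hc]
        congr 1
        simp_rw [hpt2, div_eq_mul_inv, mul_comm]
        rw [lintegral_const_mul' _ _ (ENNReal.inv_ne_top.mpr hbc)]
    _ = (ENNReal.ofReal Z)⁻¹ * ∫⁻ θ in s, ENNReal.ofReal (π θ * I θ) := by
        rw [div_eq_mul_inv, ENNReal.mul_inv (Or.inl haZ) (Or.inl haZt), inv_inv,
          ← mul_assoc, mul_assoc _ (ENNReal.ofReal c), ENNReal.mul_inv_cancel hbc hbct,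
          mul_one]
    _ = ∫⁻ θ in s, ENNReal.ofReal (π θ * I θ / Z) := by
        simp_rw [hpt, div_eq_mul_inv, mul_comm]
        rw [lintegral_const_mul' _ _ (ENNReal.inv_ne_top.mpr haZ), mul_comm]
end

section
/- (Interpretation of Algorithm A.) In the rejection scheme in which θ ~ π, X | θ ~ f(·|θ), and θ is accepted if and only if ‖X − D‖ ≤ δ (Algorithm A with Euclidean metric), and assuming P(‖X − D‖ ≤ δ) > 0, the conditional distribution of θ given acceptance equals the conditional distribution of θ̂ given D' = D in the additive-error model θ̂ ~ π, X | θ̂ ~ f(·|θ̂), D' := X + ε, where ε is independent and uniformly distributed on the closed Euclidean ball of radius δ centred at 0 in ℝ^d. -/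
/-!
Let `L(θ, d) = ∫ πu(d - x) f(x|θ) dx = vol(B_δ)⁻¹ ∫_{B_δ(d)} f(x|θ) dx` and `Z(d) = ∫ π L(·, d)`.
The acceptance event `X ∈ B_δ(D)` meets `A × ℝ^d` with probability `vol(B_δ) ∫_A π L(·, D)`, so
conditioning on it gives the density `π L(·, D) / Z(D)`. By translation invariance of Lebesgue
measure, `(θ̂, X + ε)` has the convolved density `π(θ) L(θ, d)`, which is the marginal density
`Z(d)` of `D'` times the same posterior `π L(·, d) / Z(d)`.
-/

open MeasureTheory ProbabilityTheory Metric Set Function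
open scoped ENNReal

lemma lintegral_ofReal_eq_one {α : Type*} [MeasurableSpace α] {μ : Measure α} {g : α → ℝ}
    (hg_nonneg : ∀ x, 0 ≤ g x) (hg : ∫ x, g x ∂μ = 1) : ∫⁻ x, ENNReal.ofReal (g x) ∂μ = 1 := by
  rw [← ofReal_integral_eq_lintegral_ofReal (.of_integral_ne_zero (hg ▸ one_ne_zero))
    (ae_of_all _ hg_nonneg), hg, ENNReal.ofReal_one]

-- Where `∫ g = 0` the division is junk, but then the set integral vanishes as well.
lemma mul_setIntegral_div_integral {α : Type*} [MeasurableSpace α] {μ : Measure α} {g : α → ℝ}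
    (hg : Integrable g μ) (hg_nonneg : 0 ≤ᵐ[μ] g) (s : Set α) :
    (∫ x, g x ∂μ) * ∫ x in s, g x / ∫ x', g x' ∂μ ∂μ = ∫ x in s, g x ∂μ := by
  rw [integral_div]
  refine mul_div_cancel_of_imp' fun hzero => le_antisymm ?_ (setIntegral_nonneg_of_ae_restrict
    (ae_restrict_of_ae hg_nonneg))
  exact hzero ▸ setIntegral_le_integral hg hg_nonneg

lemma withDensity_ofReal_div_integral {Θ : Type*} [MeasurableSpace Θ] {ν : Measure Θ}
    {g : Θ → ℝ} (hg_meas : Measurable g) (hg_nonneg : ∀ θ, 0 ≤ g θ)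
    (hg_ne_zero : ∫⁻ θ, ENNReal.ofReal (g θ) ∂ν ≠ 0)
    (hg_ne_top : ∫⁻ θ, ENNReal.ofReal (g θ) ∂ν ≠ ⊤) :
    ν.withDensity (fun θ => ENNReal.ofReal (g θ / ∫ θ', g θ' ∂ν))
      = (∫⁻ θ, ENNReal.ofReal (g θ) ∂ν)⁻¹ • ν.withDensity fun θ => ENNReal.ofReal (g θ) := by
  have hZ : ENNReal.ofReal (∫ θ, g θ ∂ν) = ∫⁻ θ, ENNReal.ofReal (g θ) ∂ν := by
    rw [integral_eq_lintegral_of_nonneg_ae (ae_of_all _ hg_nonneg) hg_meas.aestronglyMeasurable,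
      ENNReal.ofReal_toReal hg_ne_top]
  have hZ_pos : 0 < ∫ θ, g θ ∂ν := ENNReal.ofReal_pos.1 (hZ ▸ pos_iff_ne_zero.2 hg_ne_zero)
  rw [← withDensity_smul' _ _ (ENNReal.inv_ne_top.2 hg_ne_zero)]
  congr 1
  funext θ
  rw [Pi.smul_apply, smul_eq_mul, ENNReal.ofReal_div_of_pos hZ_pos, hZ, div_eq_mul_inv, mul_comm]

section JointDensity

variable {Θ X : Type*} [MeasurableSpace Θ] [MeasurableSpace X] {ν : Measure Θ} {μ : Measure X}
  [SFinite ν] [SFinite μ]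

lemma withDensity_ofReal_mul_apply_prod {π : Θ → ℝ} {k : Θ → X → ℝ} (hπ_meas : Measurable π)
    (hπ_nonneg : ∀ θ, 0 ≤ π θ) (hk_meas : Measurable (uncurry k)) {A : Set Θ} {S : Set X}
    (hA : MeasurableSet A) (hS : MeasurableSet S) :
    ((ν.prod μ).withDensity fun q => ENNReal.ofReal (π q.1 * k q.1 q.2)) (A ×ˢ S)
      = ∫⁻ θ in A, ENNReal.ofReal (π θ) * ∫⁻ x in S, ENNReal.ofReal (k θ x) ∂μ ∂ν := by
  rw [withDensity_apply _ (hA.prod hS), ← Measure.prod_restrict, lintegral_prod _ (by fun_prop)]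
  refine lintegral_congr fun θ => ?_
  simp_rw [ENNReal.ofReal_mul (hπ_nonneg θ)]
  exact lintegral_const_mul _ (by fun_prop)

lemma isProbabilityMeasure_withDensity_ofReal_mul {π : Θ → ℝ} {k : Θ → X → ℝ}
    (hπ_meas : Measurable π) (hπ_nonneg : ∀ θ, 0 ≤ π θ)
    (hπ_one : ∫⁻ θ, ENNReal.ofReal (π θ) ∂ν = 1) (hk_meas : Measurable (uncurry k))
    (hk_one : ∀ θ, ∫⁻ x, ENNReal.ofReal (k θ x) ∂μ = 1) :
    IsProbabilityMeasure ((ν.prod μ).withDensity fun q => ENNReal.ofReal (π q.1 * k q.1 q.2)) := by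
  constructor
  rw [← univ_prod_univ, withDensity_ofReal_mul_apply_prod hπ_meas hπ_nonneg hk_meas .univ .univ]
  simp only [Measure.restrict_univ, hk_one, mul_one, hπ_one]

lemma withDensity_ofReal_apply_prod {h : Θ × X → ℝ} (hh : Integrable h (ν.prod μ))
    (hh_nonneg : 0 ≤ h) {B : Set Θ} {C : Set X} (hB : MeasurableSet B) (hC : MeasurableSet C) :
    ((ν.prod μ).withDensity fun q => ENNReal.ofReal (h q)) (B ×ˢ C)
      = ENNReal.ofReal (∫ y in C, ∫ θ in B, h (θ, y) ∂ν ∂μ) := by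
  rw [withDensity_apply _ (hB.prod hC), ← ofReal_integral_eq_lintegral_ofReal hh.integrableOn
    (ae_of_all _ hh_nonneg), ← Measure.prod_restrict, integral_prod_symm]
  rw [Measure.prod_restrict]
  exact hh.integrableOn

end JointDensity

section AddNoise

variable {Θ G : Type*} [MeasurableSpace Θ] {ν : Measure Θ} [SFinite ν]
  [AddCommGroup G] [MeasurableSpace G] [MeasurableAdd₂ G] [MeasurableSub₂ G]
  {μ : Measure G} [SFinite μ] [μ.IsAddLeftInvariant]

lemma lintegral_prodMk_add_mul {g : Θ → G → ℝ≥0∞} {h : G → ℝ≥0∞} (hg : Measurable (uncurry g))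
    (hh : Measurable h) {F : Θ × G → ℝ≥0∞} (hF : Measurable F) :
    ∫⁻ ω, g ω.1 ω.2.1 * h ω.2.2 * F (ω.1, ω.2.1 + ω.2.2) ∂ν.prod (μ.prod μ)
      = ∫⁻ q, (∫⁻ x, g q.1 x * h (q.2 - x) ∂μ) * F q ∂ν.prod μ := by
  rw [lintegral_prod _ (by fun_prop), lintegral_prod _ (by fun_prop)]
  refine lintegral_congr fun θ => ?_
  calc ∫⁻ xe, g θ xe.1 * h xe.2 * F (θ, xe.1 + xe.2) ∂μ.prod μ
      = ∫⁻ x, ∫⁻ y, g θ x * h (y - x) * F (θ, y) ∂μ ∂μ := by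
        rw [lintegral_prod _ (by fun_prop)]
        refine lintegral_congr fun x => ?_
        simpa only [add_sub_cancel_left] using
          lintegral_add_left_eq_self (fun y => g θ x * h (y - x) * F (θ, y)) x
    _ = ∫⁻ y, ∫⁻ x, g θ x * h (y - x) * F (θ, y) ∂μ ∂μ :=
        lintegral_lintegral_swap (by fun_prop)
    _ = ∫⁻ y, (∫⁻ x, g θ x * h (y - x) ∂μ) * F (θ, y) ∂μ :=
        lintegral_congr fun y => lintegral_mul_const _ (by fun_prop)

theorem map_prodMk_add_withDensity_mul {g : Θ → G → ℝ≥0∞} {h : G → ℝ≥0∞}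
    (hg : Measurable (uncurry g)) (hh : Measurable h) :
    ((ν.prod (μ.prod μ)).withDensity fun ω => g ω.1 ω.2.1 * h ω.2.2).map
        (fun ω => (ω.1, ω.2.1 + ω.2.2))
      = (ν.prod μ).withDensity fun q => ∫⁻ x, g q.1 x * h (q.2 - x) ∂μ := by
  refine Measure.ext_of_lintegral _ fun F hF => ?_
  have hconv : Measurable fun q : Θ × G => ∫⁻ x, g q.1 x * h (q.2 - x) ∂μ :=
    Measurable.lintegral_prod_right' (f := fun p : (Θ × G) × G => g p.1.1 p.2 * h (p.1.2 - p.2))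
      (by fun_prop)
  have hdens : Measurable fun ω : Θ × G × G => g ω.1 ω.2.1 * h ω.2.2 := by fun_prop
  have hT : Measurable fun ω : Θ × G × G => (ω.1, ω.2.1 + ω.2.2) := by fun_prop
  have hFT : Measurable fun ω : Θ × G × G => F (ω.1, ω.2.1 + ω.2.2) := hF.comp hT
  rw [lintegral_map hF hT, lintegral_withDensity_eq_lintegral_mul _ hdens hFT,
    lintegral_withDensity_eq_lintegral_mul _ hconv hF]
  exact lintegral_prodMk_add_mul hg hh hF

end AddNoise

section UniformBall

variable {E : Type*} [NormedAddCommGroup E] [MeasurableSpace E] {μ : Measure E} {δ : ℝ}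

noncomputable def uniformBallDensity (μ : Measure E) (δ : ℝ) : E → ℝ :=
  (closedBall (0 : E) δ).indicator fun _ => (μ (closedBall 0 δ)).toReal⁻¹

lemma uniformBallDensity_nonneg (e : E) : 0 ≤ uniformBallDensity μ δ e :=
  indicator_nonneg (fun _ _ => by positivity) e

@[fun_prop]
lemma measurable_uniformBallDensity [OpensMeasurableSpace E] :
    Measurable (uniformBallDensity μ δ) :=
  measurable_const.indicator measurableSet_closedBall

variable [μ.IsOpenPosMeasure]

lemma ofReal_uniformBallDensity (hδ : 0 < δ) (e : E) :
    ENNReal.ofReal (uniformBallDensity μ δ e)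
      = (closedBall (0 : E) δ).indicator (fun _ => (μ (closedBall 0 δ))⁻¹) e := by
  by_cases he : e ∈ closedBall (0 : E) δ
  · rw [uniformBallDensity, indicator_of_mem he, indicator_of_mem he, ← ENNReal.toReal_inv,
      ENNReal.ofReal_toReal (ENNReal.inv_ne_top.2 (measure_closedBall_pos μ 0 hδ).ne')]
  · simp [uniformBallDensity, indicator_of_notMem he]

variable [OpensMeasurableSpace E]

lemma lintegral_ofReal_uniformBallDensity_sub_mul (hδ : 0 < δ) (g : E → ℝ≥0∞) (y : E) :
    ∫⁻ x, ENNReal.ofReal (uniformBallDensity μ δ (y - x)) * g x ∂μ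
      = (μ (closedBall 0 δ))⁻¹ * ∫⁻ x in closedBall y δ, g x ∂μ := by
  have hshift : ∀ x, (closedBall (0 : E) δ).indicator (fun _ => (μ (closedBall 0 δ))⁻¹) (y - x)
      = (closedBall y δ).indicator (fun _ => (μ (closedBall 0 δ))⁻¹) x := fun x => by
    simp only [indicator, mem_closedBall, dist_eq_norm, sub_zero, norm_sub_rev]
  simp_rw [ofReal_uniformBallDensity hδ, hshift, ← indicator_mul_left]
  rw [lintegral_indicator measurableSet_closedBall,
    lintegral_const_mul' _ _ (ENNReal.inv_ne_top.2 (measure_closedBall_pos μ 0 hδ).ne')]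

variable [ProperSpace E] [IsFiniteMeasureOnCompacts μ]

lemma lintegral_ofReal_uniformBallDensity (hδ : 0 < δ) :
    ∫⁻ e, ENNReal.ofReal (uniformBallDensity μ δ e) ∂μ = 1 := by
  simp_rw [ofReal_uniformBallDensity hδ]
  rw [lintegral_indicator_const measurableSet_closedBall,
    ENNReal.inv_mul_cancel (measure_closedBall_pos μ 0 hδ).ne' measure_closedBall_lt_top.ne]

end UniformBall

section Likelihood

variable {Θ E : Type*} [NormedAddCommGroup E] [MeasurableSpace E] {μ : Measure E} {δ : ℝ}
  {π : Θ → ℝ} {f : Θ → E → ℝ}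

noncomputable def uniformNoiseLikelihood (μ : Measure E) (δ : ℝ) (f : Θ → E → ℝ) (θ : Θ)
    (y : E) : ℝ :=
  ∫ x, uniformBallDensity μ δ (y - x) * f θ x ∂μ

lemma uniformNoiseLikelihood_nonneg {θ : Θ} (hf_nonneg : ∀ x, 0 ≤ f θ x) (y : E) :
    0 ≤ uniformNoiseLikelihood μ δ f θ y :=
  integral_nonneg fun x => mul_nonneg (uniformBallDensity_nonneg _) (hf_nonneg x)

variable [OpensMeasurableSpace E] [MeasurableSub₂ E]

lemma measurable_uniformNoiseLikelihood [MeasurableSpace Θ] [SFinite μ]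
    (hf_meas : Measurable (uncurry f)) : Measurable (uncurry (uniformNoiseLikelihood μ δ f)) := by
  have hintegrand : Measurable fun p : (Θ × E) × E =>
      uniformBallDensity μ δ (p.1.2 - p.2) * f p.1.1 p.2 := by
    fun_prop
  exact hintegrand.stronglyMeasurable.integral_prod_right'.measurable

lemma ofReal_uniformNoiseLikelihood [μ.IsOpenPosMeasure] (hδ : 0 < δ) {θ : Θ}
    (hf_int : Integrable (f θ) μ) (hf_nonneg : ∀ x, 0 ≤ f θ x) (y : E) :
    ENNReal.ofReal (uniformNoiseLikelihood μ δ f θ y)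
      = (μ (closedBall 0 δ))⁻¹ * ∫⁻ x in closedBall y δ, ENNReal.ofReal (f θ x) ∂μ := by
  have hlint : ∫⁻ x, ENNReal.ofReal (uniformBallDensity μ δ (y - x) * f θ x) ∂μ
      = (μ (closedBall 0 δ))⁻¹ * ∫⁻ x in closedBall y δ, ENNReal.ofReal (f θ x) ∂μ := by
    simp_rw [ENNReal.ofReal_mul (uniformBallDensity_nonneg _)]
    exact lintegral_ofReal_uniformBallDensity_sub_mul hδ _ y
  have hfinite :
      (μ (closedBall 0 δ))⁻¹ * ∫⁻ x in closedBall y δ, ENNReal.ofReal (f θ x) ∂μ ≠ ⊤ :=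
    ENNReal.mul_ne_top (ENNReal.inv_ne_top.2 (measure_closedBall_pos μ 0 hδ).ne')
      (ne_top_of_le_ne_top hf_int.lintegral_lt_top.ne (setLIntegral_le_lintegral _ _))
  rw [uniformNoiseLikelihood, integral_eq_lintegral_of_nonneg_ae
    (ae_of_all _ fun x => mul_nonneg (uniformBallDensity_nonneg _) (hf_nonneg x))
    ((by fun_prop : Measurable fun x => uniformBallDensity μ δ (y - x)).aestronglyMeasurable.mul
      hf_int.aestronglyMeasurable), hlint, ENNReal.ofReal_toReal hfinite]

lemma lintegral_ofReal_mul_uniformBallDensity_sub [μ.IsOpenPosMeasure] (hδ : 0 < δ)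
    (hπ_nonneg : ∀ θ, 0 ≤ π θ) (hf_nonneg : ∀ θ x, 0 ≤ f θ x)
    (hf_int : ∀ θ, Integrable (f θ) μ) (θ : Θ) (y : E) :
    ∫⁻ x, ENNReal.ofReal (π θ * f θ x) * ENNReal.ofReal (uniformBallDensity μ δ (y - x)) ∂μ
      = ENNReal.ofReal (π θ * uniformNoiseLikelihood μ δ f θ y) := by
  simp_rw [ENNReal.ofReal_mul (hπ_nonneg θ), mul_assoc, mul_comm (ENNReal.ofReal (f θ _))]
  rw [lintegral_const_mul' _ _ ENNReal.ofReal_ne_top,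
    lintegral_ofReal_uniformBallDensity_sub_mul hδ _ y,
    ofReal_uniformNoiseLikelihood hδ (hf_int θ) (hf_nonneg θ)]

end Likelihood

section ABC

variable {Θ E : Type*} [MeasurableSpace Θ] {ν : Measure Θ} [SFinite ν]
  [NormedAddCommGroup E] [NormedSpace ℝ E] [FiniteDimensional ℝ E] [MeasurableSpace E]
  [BorelSpace E] {μ : Measure E} [μ.IsAddHaarMeasure]
  {π : Θ → ℝ} {f : Θ → E → ℝ} {δ : ℝ}

lemma withDensity_ofReal_mul_apply_prod_closedBall (hδ : 0 < δ) (hπ_meas : Measurable π)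
    (hπ_nonneg : ∀ θ, 0 ≤ π θ) (hf_meas : Measurable (uncurry f)) (hf_nonneg : ∀ θ x, 0 ≤ f θ x)
    (hf_int : ∀ θ, Integrable (f θ) μ) {A : Set Θ} (hA : MeasurableSet A) (y : E) :
    ((ν.prod μ).withDensity fun q => ENNReal.ofReal (π q.1 * f q.1 q.2)) (A ×ˢ closedBall y δ)
      = μ (closedBall 0 δ)
        * ∫⁻ θ in A, ENNReal.ofReal (π θ * uniformNoiseLikelihood μ δ f θ y) ∂ν := by
  rw [withDensity_ofReal_mul_apply_prod hπ_meas hπ_nonneg hf_meas hA measurableSet_closedBall,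
    ← lintegral_const_mul' _ _ measure_closedBall_lt_top.ne]
  refine lintegral_congr fun θ => ?_
  rw [ENNReal.ofReal_mul (hπ_nonneg θ), ofReal_uniformNoiseLikelihood hδ (hf_int θ) (hf_nonneg θ),
    mul_left_comm, ← mul_assoc (μ _), ENNReal.mul_inv_cancel (measure_closedBall_pos μ 0 hδ).ne'
      measure_closedBall_lt_top.ne, one_mul]

lemma map_fst_restrict_univ_prod_closedBall (hδ : 0 < δ) (hπ_meas : Measurable π)
    (hπ_nonneg : ∀ θ, 0 ≤ π θ) (hf_meas : Measurable (uncurry f)) (hf_nonneg : ∀ θ x, 0 ≤ f θ x)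
    (hf_int : ∀ θ, Integrable (f θ) μ) (y : E) :
    (((ν.prod μ).withDensity fun q => ENNReal.ofReal (π q.1 * f q.1 q.2)).restrict
        (univ ×ˢ closedBall y δ)).map Prod.fst
      = μ (closedBall 0 δ)
        • ν.withDensity fun θ => ENNReal.ofReal (π θ * uniformNoiseLikelihood μ δ f θ y) := by
  ext A hA
  rw [Measure.map_apply measurable_fst hA, Measure.restrict_apply (measurable_fst hA),
    ← prod_univ, prod_inter_prod, inter_univ, univ_inter,
    withDensity_ofReal_mul_apply_prod_closedBall hδ hπ_meas hπ_nonneg hf_meas hf_nonneg hf_int hA,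
    Measure.smul_apply, withDensity_apply _ hA, smul_eq_mul]

theorem map_fst_cond_norm_sub_le (hδ : 0 < δ) (hπ_meas : Measurable π)
    (hπ_nonneg : ∀ θ, 0 ≤ π θ) (hπ_int : ∫ θ, π θ ∂ν = 1) (hf_meas : Measurable (uncurry f))
    (hf_nonneg : ∀ θ x, 0 ≤ f θ x) (hf_int : ∀ θ, ∫ x, f θ x ∂μ = 1) {D : E}
    (hacc_pos : 0 < ((ν.prod μ).withDensity fun q => ENNReal.ofReal (π q.1 * f q.1 q.2))
      {q | ‖q.2 - D‖ ≤ δ}) :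
    (cond ((ν.prod μ).withDensity fun q => ENNReal.ofReal (π q.1 * f q.1 q.2))
        {q | ‖q.2 - D‖ ≤ δ}).map Prod.fst
      = ν.withDensity fun θ => ENNReal.ofReal (π θ * uniformNoiseLikelihood μ δ f θ D
          / ∫ θ', π θ' * uniformNoiseLikelihood μ δ f θ' D ∂ν) := by
  set J := (ν.prod μ).withDensity fun q => ENNReal.ofReal (π q.1 * f q.1 q.2)
  set g := fun θ => π θ * uniformNoiseLikelihood μ δ f θ D
  have hf_int' : ∀ θ, Integrable (f θ) μ := fun θ => .of_integral_ne_zero (hf_int θ ▸ one_ne_zero)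
  have hJ_prob : IsProbabilityMeasure J :=
    isProbabilityMeasure_withDensity_ofReal_mul hπ_meas hπ_nonneg
      (lintegral_ofReal_eq_one hπ_nonneg hπ_int) hf_meas
      fun θ => lintegral_ofReal_eq_one (hf_nonneg θ) (hf_int θ)
  have hS : {q : Θ × E | ‖q.2 - D‖ ≤ δ} = univ ×ˢ closedBall D δ := by
    ext q
    simp [dist_eq_norm]
  have hball_ne_zero : μ (closedBall 0 δ) ≠ 0 := (measure_closedBall_pos μ 0 hδ).ne'
  have hball_ne_top : μ (closedBall 0 δ) ≠ ⊤ := measure_closedBall_lt_top.ne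
  have hJS : J (univ ×ˢ closedBall D δ) = μ (closedBall 0 δ) * ∫⁻ θ, ENNReal.ofReal (g θ) ∂ν := by
    rw [withDensity_ofReal_mul_apply_prod_closedBall hδ hπ_meas hπ_nonneg hf_meas hf_nonneg
      hf_int' .univ, Measure.restrict_univ]
  have hg_ne_zero : ∫⁻ θ, ENNReal.ofReal (g θ) ∂ν ≠ 0 :=
    right_ne_zero_of_mul (hJS ▸ hS ▸ hacc_pos.ne')
  have hg_ne_top : ∫⁻ θ, ENNReal.ofReal (g θ) ∂ν ≠ ⊤ := fun htop =>
    measure_ne_top J _ (hJS ▸ ENNReal.mul_eq_top.2 (.inl ⟨hball_ne_zero, htop⟩))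
  have hg_meas : Measurable g := hπ_meas.mul
    ((measurable_uniformNoiseLikelihood hf_meas).comp (measurable_id.prodMk measurable_const))
  rw [ProbabilityTheory.cond, Measure.map_smul, hS,
    map_fst_restrict_univ_prod_closedBall hδ hπ_meas hπ_nonneg hf_meas hf_nonneg hf_int',
    smul_smul, hJS, withDensity_ofReal_div_integral hg_meas (fun θ => mul_nonneg (hπ_nonneg θ)
      (uniformNoiseLikelihood_nonneg (hf_nonneg θ) D)) hg_ne_zero hg_ne_top,
    ENNReal.mul_inv (.inl hball_ne_zero) (.inl hball_ne_top), mul_right_comm,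
    ENNReal.inv_mul_cancel hball_ne_zero hball_ne_top, one_mul]

theorem map_prodMk_add_withDensity_uniformBallDensity (hδ : 0 < δ) (hπ_meas : Measurable π)
    (hπ_nonneg : ∀ θ, 0 ≤ π θ) (hf_meas : Measurable (uncurry f)) (hf_nonneg : ∀ θ x, 0 ≤ f θ x)
    (hf_int : ∀ θ, Integrable (f θ) μ) :
    ((ν.prod (μ.prod μ)).withDensity fun ω =>
        ENNReal.ofReal (π ω.1 * f ω.1 ω.2.1 * uniformBallDensity μ δ ω.2.2)).map
        (fun ω => (ω.1, ω.2.1 + ω.2.2))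
      = (ν.prod μ).withDensity fun q =>
          ENNReal.ofReal (π q.1 * uniformNoiseLikelihood μ δ f q.1 q.2) := by
  have hsplit : (fun ω : Θ × E × E =>
      ENNReal.ofReal (π ω.1 * f ω.1 ω.2.1 * uniformBallDensity μ δ ω.2.2))
      = fun ω => ENNReal.ofReal (π ω.1 * f ω.1 ω.2.1)
          * ENNReal.ofReal (uniformBallDensity μ δ ω.2.2) :=
    funext fun ω => ENNReal.ofReal_mul (mul_nonneg (hπ_nonneg _) (hf_nonneg _ _))
  have hg : Measurable (uncurry fun θ x => ENNReal.ofReal (π θ * f θ x)) := by fun_prop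
  have hh : Measurable fun e => ENNReal.ofReal (uniformBallDensity μ δ e) := by fun_prop
  rw [hsplit, map_prodMk_add_withDensity_mul (ν := ν) hg hh]
  simp_rw [lintegral_ofReal_mul_uniformBallDensity_sub hδ hπ_nonneg hf_nonneg hf_int]

lemma isProbabilityMeasure_withDensity_uniformBallDensity (hδ : 0 < δ) (hπ_meas : Measurable π)
    (hπ_nonneg : ∀ θ, 0 ≤ π θ) (hπ_int : ∫ θ, π θ ∂ν = 1) (hf_meas : Measurable (uncurry f))
    (hf_nonneg : ∀ θ x, 0 ≤ f θ x) (hf_int : ∀ θ, ∫ x, f θ x ∂μ = 1) :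
    IsProbabilityMeasure ((ν.prod (μ.prod μ)).withDensity fun ω =>
      ENNReal.ofReal (π ω.1 * f ω.1 ω.2.1 * uniformBallDensity μ δ ω.2.2)) := by
  have hk : Measurable (uncurry fun θ (xe : E × E) => f θ xe.1 * uniformBallDensity μ δ xe.2) := by
    fun_prop
  have hk_one : ∀ θ,
      ∫⁻ xe, ENNReal.ofReal (f θ xe.1 * uniformBallDensity μ δ xe.2) ∂μ.prod μ = 1 := fun θ => by
    have hfθ : AEMeasurable (fun x => ENNReal.ofReal (f θ x)) μ := by fun_prop
    have hu : AEMeasurable (fun e => ENNReal.ofReal (uniformBallDensity μ δ e)) μ := by fun_prop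
    simp_rw [ENNReal.ofReal_mul (hf_nonneg θ _)]
    rw [lintegral_prod_mul hfθ hu, lintegral_ofReal_eq_one (hf_nonneg θ) (hf_int θ),
      lintegral_ofReal_uniformBallDensity hδ, one_mul]
  have := isProbabilityMeasure_withDensity_ofReal_mul hπ_meas hπ_nonneg
    (lintegral_ofReal_eq_one hπ_nonneg hπ_int) hk hk_one
  simpa only [mul_assoc] using this

theorem map_prodMk_add_apply_prod (hδ : 0 < δ) (hπ_meas : Measurable π)
    (hπ_nonneg : ∀ θ, 0 ≤ π θ) (hπ_int : ∫ θ, π θ ∂ν = 1) (hf_meas : Measurable (uncurry f))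
    (hf_nonneg : ∀ θ x, 0 ≤ f θ x) (hf_int : ∀ θ, ∫ x, f θ x ∂μ = 1) {B : Set Θ} {C : Set E}
    (hB : MeasurableSet B) (hC : MeasurableSet C) :
    ((ν.prod (μ.prod μ)).withDensity fun ω =>
        ENNReal.ofReal (π ω.1 * f ω.1 ω.2.1 * uniformBallDensity μ δ ω.2.2)).map
        (fun ω => (ω.1, ω.2.1 + ω.2.2)) (B ×ˢ C)
      = ENNReal.ofReal (∫ y in C, (∫ θ', π θ' * uniformNoiseLikelihood μ δ f θ' y ∂ν) *
          ∫ θ in B, π θ * uniformNoiseLikelihood μ δ f θ y /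
            (∫ θ', π θ' * uniformNoiseLikelihood μ δ f θ' y ∂ν) ∂ν ∂μ) := by
  set h := fun q : Θ × E => π q.1 * uniformNoiseLikelihood μ δ f q.1 q.2
  have hh_nonneg : 0 ≤ h := fun q =>
    mul_nonneg (hπ_nonneg q.1) (uniformNoiseLikelihood_nonneg (hf_nonneg q.1) q.2)
  have hh_meas : Measurable h :=
    (hπ_meas.comp measurable_fst).mul (measurable_uniformNoiseLikelihood hf_meas)
  have hQ_prob := isProbabilityMeasure_withDensity_uniformBallDensity hδ hπ_meas hπ_nonneg hπ_int
    hf_meas hf_nonneg hf_int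
  have hP := map_prodMk_add_withDensity_uniformBallDensity (ν := ν) hδ hπ_meas hπ_nonneg hf_meas
    hf_nonneg fun θ => .of_integral_ne_zero (hf_int θ ▸ one_ne_zero)
  have hP_prob : IsProbabilityMeasure ((ν.prod μ).withDensity fun q => ENNReal.ofReal (h q)) :=
    hP ▸ Measure.isProbabilityMeasure_map (by fun_prop)
  have hh_int : Integrable h (ν.prod μ) := by
    refine (lintegral_ofReal_ne_top_iff_integrable hh_meas.aestronglyMeasurable
      (ae_of_all _ hh_nonneg)).1 ?_
    rw [← setLIntegral_univ, ← withDensity_apply _ .univ]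
    exact measure_ne_top _ _
  rw [hP, withDensity_ofReal_apply_prod hh_int hh_nonneg hB hC]
  congr 1
  refine integral_congr_ae (ae_restrict_of_ae ?_)
  filter_upwards [hh_int.prod_left_ae] with y hy
  exact (mul_setIntegral_div_integral hy (ae_of_all _ fun θ => hh_nonneg (θ, y)) B).symm

end ABC

/-- **interpretation of Algorithm A.** Accepting θ iff ‖X − D‖ ≤ δ (Euclidean
metric) yields, conditionally on acceptance, exactly the posterior of the additive-error model
D' = X + ε with ε uniform on the closed Euclidean δ-ball: writing π_u for the uniform density
on that ball, the first conjunct says the accepted-θ distribution has density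
θ ↦ π(θ) ∫ π_u(D − x) f(x|θ) dx / Z(D), and the second disintegrates the law of (θ̂, D') over
D', exhibiting θ ↦ π(θ) ∫ π_u(d − x) f(x|θ) dx / Z(d) as the conditional density of θ̂ given
D' = d; at d = D these densities coincide. -/
theorem algorithmA_is_uniform_error_posterior (p d : ℕ)
    (π : (Fin p → ℝ) → ℝ) (f : (Fin p → ℝ) → EuclideanSpace ℝ (Fin d) → ℝ)
    (D : EuclideanSpace ℝ (Fin d)) (δ : ℝ)
    (hπ_meas : Measurable π) (hπ_nonneg : ∀ θ, 0 ≤ π θ) (hπ_int : ∫ θ, π θ = 1)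
    (hf_meas : Measurable (Function.uncurry f)) (hf_nonneg : ∀ θ x, 0 ≤ f θ x)
    (hf_int : ∀ θ, ∫ x, f θ x = 1)
    (hδ : 0 < δ)
    (hacc_pos : 0 < ((volume : Measure ((Fin p → ℝ) × EuclideanSpace ℝ (Fin d))).withDensity
        (fun q => ENNReal.ofReal (π q.1 * f q.1 q.2)))
        {q : (Fin p → ℝ) × EuclideanSpace ℝ (Fin d) | ‖q.2 - D‖ ≤ δ}) :
    let πu : EuclideanSpace ℝ (Fin d) → ℝ := fun e =>
      Set.indicator (Metric.closedBall (0 : EuclideanSpace ℝ (Fin d)) δ)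
        (fun _ => ((volume (Metric.closedBall (0 : EuclideanSpace ℝ (Fin d)) δ)).toReal)⁻¹) e
    (Measure.map Prod.fst
      (ProbabilityTheory.cond
        ((volume : Measure ((Fin p → ℝ) × EuclideanSpace ℝ (Fin d))).withDensity
          (fun q => ENNReal.ofReal (π q.1 * f q.1 q.2)))
        {q : (Fin p → ℝ) × EuclideanSpace ℝ (Fin d) | ‖q.2 - D‖ ≤ δ})
    = (volume : Measure (Fin p → ℝ)).withDensity
        (fun θ => ENNReal.ofReal (π θ * (∫ x, πu (D - x) * f θ x) /
          (∫ θ', π θ' * ∫ x, πu (D - x) * f θ' x))))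
    ∧
    (∀ B : Set (Fin p → ℝ), ∀ C : Set (EuclideanSpace ℝ (Fin d)),
      MeasurableSet B → MeasurableSet C →
      Measure.map
        (fun ω : (Fin p → ℝ) × EuclideanSpace ℝ (Fin d) × EuclideanSpace ℝ (Fin d) =>
          (ω.1, ω.2.1 + ω.2.2))
        ((volume : Measure
            ((Fin p → ℝ) × EuclideanSpace ℝ (Fin d) × EuclideanSpace ℝ (Fin d))).withDensity
          (fun ω => ENNReal.ofReal (π ω.1 * f ω.1 ω.2.1 * πu ω.2.2)))
        (B ×ˢ C)
      = ENNReal.ofReal (∫ dd in C,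
          (∫ θ', π θ' * ∫ x, πu (dd - x) * f θ' x) *
            ∫ θ in B, π θ * (∫ x, πu (dd - x) * f θ x) /
              (∫ θ', π θ' * ∫ x, πu (dd - x) * f θ' x))) := by
  intro πu
  exact ⟨map_fst_cond_norm_sub_le hδ hπ_meas hπ_nonneg hπ_int hf_meas hf_nonneg hf_int hacc_pos,
    fun B C hB hC =>
      map_prodMk_add_apply_prod hδ hπ_meas hπ_nonneg hπ_int hf_meas hf_nonneg hf_int hB hC⟩
end

section
/- (Detailed balance for Algorithm C.) Define L(θ) := ∫ π_ε(D − x) f(x|θ) dx and suppose π(θ) > 0 and q(θ, θ') > 0 for all θ, θ'. Define the transition density p(θ, θ') := q(θ, θ') · (L(θ')/c) · min(1, q(θ', θ)π(θ') / (q(θ, θ')π(θ))). Then for all θ, θ' ∈ Θ, π(θ) L(θ) p(θ, θ') = π(θ') L(θ') p(θ', θ); that is, the Markov chain of Algorithm C satisfies detailed balance with respect to the (unnormalised) target density θ ↦ π(θ) L(θ). -/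
open MeasureTheory

lemma mul_min_one_div (a b : ℝ) (ha : 0 < a) : a * min 1 (b / a) = min a b := by
  rw [mul_min_of_nonneg _ _ ha.le, mul_one, mul_div_cancel₀ _ ha.ne']

/-- **detailed balance for Algorithm C.** With L(θ) = ∫ π_ε(D − x) f(x|θ) dx,
π > 0, q > 0, and transition density
p(θ, θ') = q(θ, θ') (L(θ')/c) min(1, q(θ', θ)π(θ')/(q(θ, θ')π(θ))), the chain of Algorithm C
satisfies detailed balance with respect to the unnormalised target θ ↦ π(θ) L(θ):
π(θ) L(θ) p(θ, θ') = π(θ') L(θ') p(θ', θ). -/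
theorem algorithmC_detailed_balance (p d : ℕ)
    (π : (Fin p → ℝ) → ℝ) (f : (Fin p → ℝ) → (Fin d → ℝ) → ℝ)
    (πε : (Fin d → ℝ) → ℝ) (D : Fin d → ℝ) (c : ℝ)
    (q : (Fin p → ℝ) → (Fin p → ℝ) → ℝ)
    (hπ_meas : Measurable π) (hπ_pos : ∀ θ, 0 < π θ) (hπ_int : ∫ θ, π θ = 1)
    (hf_meas : Measurable (Function.uncurry f)) (hf_nonneg : ∀ θ x, 0 ≤ f θ x)
    (hf_int : ∀ θ, ∫ x, f θ x = 1)
    (hε_meas : Measurable πε) (hε_nonneg : ∀ r, 0 ≤ πε r) (hε_int : ∫ r, πε r = 1)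
    (hc : 0 < c) (hεc : ∀ r, πε r ≤ c)
    (hq_pos : ∀ θ θ', 0 < q θ θ') :
    let L : (Fin p → ℝ) → ℝ := fun θ => ∫ x, πε (D - x) * f θ x
    let P : (Fin p → ℝ) → (Fin p → ℝ) → ℝ := fun θ θ' =>
      q θ θ' * (L θ' / c) * min 1 (q θ' θ * π θ' / (q θ θ' * π θ))
    ∀ θ θ' : Fin p → ℝ, π θ * L θ * P θ θ' = π θ' * L θ' * P θ' θ := by
  intro L P θ θ'
  have ha : 0 < q θ θ' * π θ := mul_pos (hq_pos θ θ') (hπ_pos θ)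
  have hb : 0 < q θ' θ * π θ' := mul_pos (hq_pos θ' θ) (hπ_pos θ')
  have key : π θ * L θ * P θ θ' =
      L θ * L θ' / c * (q θ θ' * π θ * min 1 (q θ' θ * π θ' / (q θ θ' * π θ))) := by
    simp only [P]; ring
  have key' : π θ' * L θ' * P θ' θ =
      L θ * L θ' / c * (q θ' θ * π θ' * min 1 (q θ θ' * π θ / (q θ' θ * π θ'))) := by
    simp only [P]; ring
  rw [key, key', mul_min_one_div _ _ ha, mul_min_one_div _ _ hb, min_comm]
end

section
/- (Detailed balance for Algorithm D.) Define the augmented target h(θ, x) := π_ε(D − x) f(x|θ) π(θ) on Θ × 𝒳, suppose π(θ) > 0, q(θ, θ') > 0 and π_ε(D − x) > 0 for the states considered, and define the transition density p((θ, x), (θ', x')) := q(θ, θ') f(x'|θ') · min(1, π_ε(D − x') q(θ', θ) π(θ') / (π_ε(D − x) q(θ, θ') π(θ))). Then for all (θ, x), (θ', x') ∈ Θ × 𝒳, h(θ, x) p((θ, x), (θ', x')) = h(θ', x') p((θ', x'), (θ, x)). -/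
open MeasureTheory

/-- **detailed balance for Algorithm D.** With augmented target
h(θ, x) = π_ε(D − x) f(x|θ) π(θ) on Θ × 𝒳 and transition density
p((θ,x),(θ',x')) = q(θ,θ') f(x'|θ') min(1, π_ε(D−x') q(θ',θ) π(θ') / (π_ε(D−x) q(θ,θ') π(θ))),
detailed balance h(θ,x) p((θ,x),(θ',x')) = h(θ',x') p((θ',x'),(θ,x)) holds for all states with
π > 0, q > 0 and π_ε(D − ·) > 0 at the states considered. -/
theorem algorithmD_detailed_balance (p d : ℕ)
    (π : (Fin p → ℝ) → ℝ) (f : (Fin p → ℝ) → (Fin d → ℝ) → ℝ)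
    (πε : (Fin d → ℝ) → ℝ) (D : Fin d → ℝ)
    (q : (Fin p → ℝ) → (Fin p → ℝ) → ℝ)
    (hπ_meas : Measurable π) (hπ_int : ∫ θ, π θ = 1)
    (hf_meas : Measurable (Function.uncurry f)) (hf_nonneg : ∀ θ x, 0 ≤ f θ x)
    (hf_int : ∀ θ, ∫ x, f θ x = 1)
    (hε_meas : Measurable πε) (hε_nonneg : ∀ r, 0 ≤ πε r) (hε_int : ∫ r, πε r = 1) :
    let h : (Fin p → ℝ) → (Fin d → ℝ) → ℝ := fun θ x => πε (D - x) * f θ x * π θ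
    let P : (Fin p → ℝ) × (Fin d → ℝ) → (Fin p → ℝ) × (Fin d → ℝ) → ℝ := fun s s' =>
      q s.1 s'.1 * f s'.1 s'.2 *
        min 1 (πε (D - s'.2) * q s'.1 s.1 * π s'.1 / (πε (D - s.2) * q s.1 s'.1 * π s.1))
    ∀ θ θ' : Fin p → ℝ, ∀ x x' : Fin d → ℝ,
      0 < π θ → 0 < π θ' → 0 < q θ θ' → 0 < q θ' θ →
      0 < πε (D - x) → 0 < πε (D - x') →
      h θ x * P (θ, x) (θ', x') = h θ' x' * P (θ', x') (θ, x) := by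
  intro h P θ θ' x x' h1 h2 h3 h4 h5 h6
  have key : ∀ a b : ℝ, 0 < a → a * min 1 (b / a) = min a b := by
    intro a b ha
    rw [mul_min_of_nonneg _ _ ha.le, mul_one, mul_div_cancel₀ _ ha.ne']
  have ha : 0 < πε (D - x) * q θ θ' * π θ := by positivity
  have hb : 0 < πε (D - x') * q θ' θ * π θ' := by positivity
  simp only [h, P]
  have e1 : πε (D - x) * f θ x * π θ *
      (q θ θ' * f θ' x' *
        min 1 (πε (D - x') * q θ' θ * π θ' / (πε (D - x) * q θ θ' * π θ))) =
      f θ x * f θ' x' *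
        ((πε (D - x) * q θ θ' * π θ) *
          min 1 (πε (D - x') * q θ' θ * π θ' / (πε (D - x) * q θ θ' * π θ))) := by ring
  have e2 : πε (D - x') * f θ' x' * π θ' *
      (q θ' θ * f θ x *
        min 1 (πε (D - x) * q θ θ' * π θ / (πε (D - x') * q θ' θ * π θ'))) =
      f θ x * f θ' x' *
        ((πε (D - x') * q θ' θ * π θ') *
          min 1 (πε (D - x) * q θ θ' * π θ / (πε (D - x') * q θ' θ * π θ'))) := by ring
  rw [e1, e2, key _ _ ha, key _ _ hb, min_comm]
end
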